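/- arXiv:1605.00268 — 2 statements merged into one kernel-verified Lean document; each statement's English description precedes it below -/
import Mathlib

section
/- Let (G, [·,·], α) be a Hom-Lie superalgebra, (V, [·,·]_V, β) a representation, and φ an even bilinear map G × G → V that is super-skew-symmetric. Define on K = G ⊕ V the bracket d((x,u),(y,v)) = ([x,y], [x,v]_V - (-1)^{|u||y|}[y,u]_V + φ(x,y)) and the map γ(x,v) = (α(x), β(v)). Then (K, d, γ) is a Hom-Lie superalgebra if and only if φ is a 2-cocycle, i.e. for all homogeneous x,y,z: -φ([x,y], α(z)) + (-1)^{|z||y|} φ([x,z], α(y)) + φ(α(x), [y,z]) + [α(x), φ(y,z)]_V - (-1)^{|y||x|}[α(y), φ(x,z)]_V + (-1)^{|z|(|x|+|y|)}[α(z), φ(x,y)]_V = 0. -/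
/-- The sign `(-1)^{ij}` for parities `i, j ∈ ℤ/2`. -/
noncomputable def m1 (i j : ZMod 2) : ℂ := (-1 : ℂ) ^ (i.val * j.val)

/-- The extension bracket on `K = G ⊕ V`:
`d((x,u),(y,v)) = ([x,y], [x,v]_V - (-1)^{|u||y|}[y,u]_V + φ(x,y))`,
for homogeneous arguments of parities `i, j`. -/
noncomputable def dd {V W : Type*} [AddCommGroup V] [Module ℂ V]
    [AddCommGroup W] [Module ℂ W]
    (br : V →ₗ[ℂ] V →ₗ[ℂ] V) (act : V →ₗ[ℂ] W →ₗ[ℂ] W)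
    (φ : V →ₗ[ℂ] V →ₗ[ℂ] W) (i j : ZMod 2) (X Y : V × W) : V × W :=
  (br X.1 Y.1, act X.1 Y.2 - m1 i j • act Y.1 X.2 + φ X.1 Y.1)


lemma zmod2_cases' (i : ZMod 2) : i = 0 ∨ i = 1 := by revert i; decide
lemma zmod2_add' : (1+1 : ZMod 2) = 0 := by decide
lemma zmod2_two' : (2 : ZMod 2) = 0 := by decide
lemma zmod2_valtwo' : ZMod.val (2 : ZMod 2) = 0 := by decide

/-- `(G ⊕ V, d, γ)` is a Hom-Lie superalgebra iff `φ` is a `2`-cocycle. -/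
theorem stmt3 {V W : Type*} [AddCommGroup V] [Module ℂ V]
    [AddCommGroup W] [Module ℂ W]
    (g : ZMod 2 → Submodule ℂ V)
    (br : V →ₗ[ℂ] V →ₗ[ℂ] V) (α : V →ₗ[ℂ] V)
    -- Hom-Lie superalgebra axioms for G
    (hgbr : ∀ {i j : ZMod 2} {x y : V}, x ∈ g i → y ∈ g j → br x y ∈ g (i + j))
    (hga : ∀ {i : ZMod 2} {x : V}, x ∈ g i → α x ∈ g i)
    (hskew : ∀ {i j : ZMod 2} {x y : V}, x ∈ g i → y ∈ g j →
      br x y = -(m1 i j) • br y x)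
    (hjac : ∀ {i j k : ZMod 2} {x y z : V}, x ∈ g i → y ∈ g j → z ∈ g k →
      m1 i k • br (α x) (br y z) + m1 k j • br (α z) (br x y)
        + m1 j i • br (α y) (br z x) = 0)
    -- representation (V, [·,·]_V, β) on W
    (gV : ZMod 2 → Submodule ℂ W)
    (act : V →ₗ[ℂ] W →ₗ[ℂ] W) (β : W →ₗ[ℂ] W)
    (hgact : ∀ {i j : ZMod 2} {x : V} {v : W}, x ∈ g i → v ∈ gV j → act x v ∈ gV (i + j))
    (hgβ : ∀ {i : ZMod 2} {v : W}, v ∈ gV i → β v ∈ gV i)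
    (hrep : ∀ {i j : ZMod 2} {x y : V} {v : W}, x ∈ g i → y ∈ g j →
      act (br x y) (β v) = act (α x) (act y v) - m1 i j • act (α y) (act x v))
    -- even super-skew-symmetric bilinear map φ
    (φ : V →ₗ[ℂ] V →ₗ[ℂ] W)
    (hφg : ∀ {i j : ZMod 2} {x y : V}, x ∈ g i → y ∈ g j → φ x y ∈ gV (i + j))
    (hφskew : ∀ {i j : ZMod 2} {x y : V}, x ∈ g i → y ∈ g j →
      φ x y = -(m1 i j) • φ y x) :
    -- (K, d, γ) is a Hom-Lie superalgebra
    ((∀ (i j : ZMod 2) (X Y : V × W),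
        X ∈ (g i).prod (gV i) → Y ∈ (g j).prod (gV j) →
        dd br act φ i j X Y = -(m1 i j) • dd br act φ j i Y X) ∧
      (∀ (i j k : ZMod 2) (X Y Z : V × W),
        X ∈ (g i).prod (gV i) → Y ∈ (g j).prod (gV j) → Z ∈ (g k).prod (gV k) →
        m1 i k • dd br act φ i (j + k) (α X.1, β X.2) (dd br act φ j k Y Z)
          + m1 k j • dd br act φ k (i + j) (α Z.1, β Z.2) (dd br act φ i j X Y)
          + m1 j i • dd br act φ j (k + i) (α Y.1, β Y.2) (dd br act φ k i Z X) = 0))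
    ↔
    -- φ is a 2-cocycle
    (∀ (i j k : ZMod 2) (x y z : V), x ∈ g i → y ∈ g j → z ∈ g k →
      -φ (br x y) (α z) + m1 k j • φ (br x z) (α y) + φ (α x) (br y z)
        + act (α x) (φ y z) - m1 j i • act (α y) (φ x z)
        + m1 k (i + j) • act (α z) (φ x y) = 0) := by
  constructor
  · rintro ⟨-, h2⟩ i j k x y z hx hy hz
    have hX : ((x,(0:W)) : V×W) ∈ (g i).prod (gV i) := ⟨hx, (gV i).zero_mem⟩
    have hY : ((y,(0:W)) : V×W) ∈ (g j).prod (gV j) := ⟨hy, (gV j).zero_mem⟩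
    have hZ : ((z,(0:W)) : V×W) ∈ (g k).prod (gV k) := ⟨hz, (gV k).zero_mem⟩
    have J := congrArg Prod.snd (h2 i j k _ _ _ hX hY hZ)
    simp only [dd, Prod.snd_add, Prod.smul_snd, Prod.snd_zero, map_zero, smul_zero,
      sub_zero, zero_sub, add_zero, zero_add] at J
    rw [hskew hz hx] at J
    rw [hφskew (hga hz) (hgbr hx hy), hφskew hz hx] at J
    simp only [map_smul, map_neg, LinearMap.smul_apply, LinearMap.neg_apply, smul_neg,
      neg_smul, neg_neg, smul_smul] at J
    rw [hφskew (hga hy) (hgbr hx hz)] at J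
    simp only [map_smul, map_neg, LinearMap.smul_apply, LinearMap.neg_apply, smul_neg,
      neg_smul, neg_neg, smul_smul] at J
    linear_combination (norm := (match_scalars <;> (rcases (zmod2_cases' i) with rfl|rfl <;>
      rcases (zmod2_cases' j) with rfl|rfl <;> rcases (zmod2_cases' k) with rfl|rfl <;>
      norm_num [m1, ZMod.val_one, zmod2_add', zmod2_two', zmod2_valtwo'])))
      (m1 i k) • J
  · intro hc
    constructor
    · intro i j X Y hX hY
      refine Prod.ext ?_ ?_
      · simpa only [dd, Prod.smul_fst] using hskew hX.1 hY.1
      · simp only [dd, Prod.smul_snd]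
        rw [hφskew hY.1 hX.1]
        match_scalars <;> (rcases (zmod2_cases' i) with rfl|rfl <;>
          rcases (zmod2_cases' j) with rfl|rfl <;>
          norm_num [m1, ZMod.val_one, zmod2_add', zmod2_two', zmod2_valtwo'])
    · intro i j k X Y Z hX hY hZ
      obtain ⟨hx, hu⟩ := hX
      obtain ⟨hy, hv⟩ := hY
      obtain ⟨hz, hw⟩ := hZ
      obtain ⟨x, u⟩ := X
      obtain ⟨y, v⟩ := Y
      obtain ⟨z, w⟩ := Z
      refine Prod.ext ?_ ?_
      · simpa only [dd, Prod.fst_add, Prod.smul_fst, Prod.fst_zero] using hjac hx hy hz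
      · simp only [dd, Prod.snd_add, Prod.smul_snd, Prod.snd_zero]
        rw [hrep hy hz, hrep hx hy, hrep hz hx]
        rw [hskew hz hx]
        rw [hφskew (hga hz) (hgbr hx hy), hφskew hz hx]
        simp only [map_smul, map_neg, map_sub, map_add, LinearMap.smul_apply,
          LinearMap.neg_apply, smul_neg, neg_smul, neg_neg, smul_smul, smul_sub, smul_add]
        rw [hφskew (hga hy) (hgbr hx hz)]
        simp only [map_smul, map_neg, LinearMap.smul_apply, LinearMap.neg_apply,
          smul_neg, neg_smul, neg_neg, smul_smul]
        have H := hc i j k x y z hx hy hz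
        linear_combination (norm := (match_scalars <;> (rcases (zmod2_cases' i) with rfl|rfl <;>
          rcases (zmod2_cases' j) with rfl|rfl <;> rcases (zmod2_cases' k) with rfl|rfl <;>
          norm_num [m1, ZMod.val_one, zmod2_add', zmod2_two', zmod2_valtwo'])))
          (m1 i k) • H
end

section
/- The odd map D_4 defined on the q-deformed Witt superalgebra by D_4(L_n) = 0 and D_4(G_n) = L_{n+1} is an odd α⁰-derivation of W^q. -/
noncomputable section

/-- The `q`-number `{m} = (1-q^m)/(1-q)`. -/
def qn (q : ℂ) (m : ℤ) : ℂ := (1 - q ^ m) / (1 - q)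

/-- The `q`-deformed Witt superalgebra `W^q`, with even basis indexed by `Sum.inl n`
(the `L_n`) and odd basis indexed by `Sum.inr n` (the `G_n`). -/
abbrev Wq : Type := (ℤ ⊕ ℤ) →₀ ℂ

def L (n : ℤ) : Wq := Finsupp.single (Sum.inl n) 1
def G (n : ℤ) : Wq := Finsupp.single (Sum.inr n) 1

/-- Bracket of `W^q` on basis elements:
`[L_n, L_m] = ({m}-{n}) L_{n+m}`, `[L_n, G_m] = ({m+1}-{n}) G_{n+m}`,
`[G_m, L_n] = -[L_n, G_m]`, `[G_n, G_m] = 0`. -/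
def brBasis (q : ℂ) : ℤ ⊕ ℤ → ℤ ⊕ ℤ → Wq
  | Sum.inl n, Sum.inl m => (qn q m - qn q n) • L (n + m)
  | Sum.inl n, Sum.inr m => (qn q (m + 1) - qn q n) • G (n + m)
  | Sum.inr m, Sum.inl n => -((qn q (m + 1) - qn q n) • G (n + m))
  | Sum.inr _, Sum.inr _ => 0

/-- The bilinear extension of the bracket to `W^q`. -/
def br (q : ℂ) (x y : Wq) : Wq :=
  x.sum fun a ca => y.sum fun b cb => (ca * cb) • brBasis q a b

/-- The twist map `α(L_n) = (1+q^n) L_n`, `α(G_n) = (1+q^{n+1}) G_n`. -/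
def alphaW (q : ℂ) (x : Wq) : Wq :=
  x.sum fun a ca =>
    match a with
    | Sum.inl n => (ca * (1 + q ^ n)) • L n
    | Sum.inr n => (ca * (1 + q ^ (n + 1))) • G n

/-- `par false x`: `x` is even (supported on the `L_n`);
`par true x`: `x` is odd (supported on the `G_n`). -/
def par (i : Bool) (x : Wq) : Prop :=
  if i then ∀ n, x (Sum.inl n) = 0 else ∀ n, x (Sum.inr n) = 0

/-- The sign `(-1)^{ij}` for parities `i, j`. -/
def sB (i j : Bool) : ℂ := if i && j then -1 else 1

end

/-- The odd map `D_4 : L_n ↦ 0, G_n ↦ L_{n+1}`. -/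
noncomputable def D4 (x : Wq) : Wq :=
  x.sum fun a c =>
    match a with
    | Sum.inl _ => 0
    | Sum.inr n => c • L (n + 1)

lemma D4_zero : D4 0 = 0 := by simp [D4]

lemma D4_add (x y : Wq) : D4 (x + y) = D4 x + D4 y := by
  unfold D4
  refine Finsupp.sum_add_index' (fun a => ?_) (fun a b1 b2 => ?_)
  · cases a <;> simp
  · cases a <;> simp [add_smul]

lemma D4_smul (c : ℂ) (x : Wq) : D4 (c • x) = c • D4 x := by
  unfold D4
  rw [Finsupp.smul_sum, Finsupp.sum_smul_index']
  · refine Finsupp.sum_congr fun a _ => ?_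
    cases a <;> simp [mul_smul]
  · intro a; cases a <;> simp

lemma D4_L (n : ℤ) (c : ℂ) : D4 (Finsupp.single (Sum.inl n) c) = 0 := by
  unfold D4
  rw [Finsupp.sum_single_index]
  simp

lemma D4_G (n : ℤ) (c : ℂ) : D4 (Finsupp.single (Sum.inr n) c) = c • L (n + 1) := by
  unfold D4
  rw [Finsupp.sum_single_index]
  simp

lemma br_single_single (q : ℂ) (a b : ℤ ⊕ ℤ) (c d : ℂ) :
    br q (Finsupp.single a c) (Finsupp.single b d) = (c * d) • brBasis q a b := by
  unfold br
  rw [Finsupp.sum_single_index, Finsupp.sum_single_index] <;> simp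

lemma br_zero_left (q : ℂ) (y : Wq) : br q 0 y = 0 := by simp [br]

lemma br_zero_right (q : ℂ) (x : Wq) : br q x 0 = 0 := by simp [br]

lemma br_add_left (q : ℂ) (x x' y : Wq) :
    br q (x + x') y = br q x y + br q x' y := by
  unfold br
  refine Finsupp.sum_add_index' (fun a => ?_) (fun a b1 b2 => ?_)
  · simp
  · rw [← Finsupp.sum_add]
    exact Finsupp.sum_congr fun b _ => by simp [add_mul, add_smul]

lemma br_add_right (q : ℂ) (x y y' : Wq) :
    br q x (y + y') = br q x y + br q x y' := by
  unfold br
  rw [← Finsupp.sum_add]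
  refine Finsupp.sum_congr fun a _ => ?_
  refine Finsupp.sum_add_index' (fun b => ?_) (fun b d1 d2 => ?_)
  · simp
  · simp [mul_add, add_smul]

lemma br_smul_left (q : ℂ) (c : ℂ) (x y : Wq) :
    br q (c • x) y = c • br q x y := by
  unfold br
  rw [Finsupp.smul_sum, Finsupp.sum_smul_index']
  · refine Finsupp.sum_congr fun a _ => ?_
    rw [Finsupp.smul_sum]
    exact Finsupp.sum_congr fun b _ => by simp [mul_assoc, mul_smul]
  · intro a; simp

lemma br_smul_right (q : ℂ) (c : ℂ) (x y : Wq) :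
    br q x (c • y) = c • br q x y := by
  unfold br
  rw [Finsupp.smul_sum]
  refine Finsupp.sum_congr fun a _ => ?_
  rw [Finsupp.smul_sum, Finsupp.sum_smul_index' (fun b => by simp)]
  refine Finsupp.sum_congr fun b _ => ?_
  rw [smul_eq_mul, mul_left_comm, mul_smul]

lemma D4_sum {ι : Type*} (s : Finset ι) (f : ι → Wq) :
    D4 (∑ i ∈ s, f i) = ∑ i ∈ s, D4 (f i) :=
  map_sum (AddMonoidHom.mk' D4 D4_add) f s

lemma br_sum_left {ι : Type*} (q : ℂ) (s : Finset ι) (f : ι → Wq) (y : Wq) :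
    br q (∑ i ∈ s, f i) y = ∑ i ∈ s, br q (f i) y :=
  map_sum (AddMonoidHom.mk' (fun x => br q x y) (fun a b => br_add_left q a b y)) f s

lemma br_sum_right {ι : Type*} (q : ℂ) (s : Finset ι) (x : Wq) (f : ι → Wq) :
    br q x (∑ i ∈ s, f i) = ∑ i ∈ s, br q x (f i) :=
  map_sum (AddMonoidHom.mk' (fun y => br q x y) (fun a b => br_add_right q x a b)) f s

/-- The sign attached to a basis index. -/
noncomputable def sgn : ℤ ⊕ ℤ → ℂ
  | Sum.inl _ => 1
  | Sum.inr _ => -1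

lemma key (q : ℂ) (a b : ℤ ⊕ ℤ) (c d : ℂ) :
    D4 (br q (Finsupp.single a c) (Finsupp.single b d)) =
      br q (D4 (Finsupp.single a c)) (Finsupp.single b d) +
        sgn a • br q (Finsupp.single a c) (D4 (Finsupp.single b d)) := by
  rcases a with n | n <;> rcases b with m | m
  · -- L L
    rw [br_single_single, D4_L, D4_L, br_zero_left, br_zero_right]
    simp only [brBasis]
    rw [D4_smul, D4_smul, L, D4_L]
    simp
  · -- L G
    rw [br_single_single, D4_L, br_zero_left, D4_G, zero_add]
    simp only [brBasis, sgn, one_smul]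
    rw [br_smul_right, L, br_single_single, D4_smul, D4_smul, G, D4_G]
    simp only [brBasis]
    have h : n + m + 1 = n + (m + 1) := by ring
    rw [h, smul_smul, smul_smul, smul_smul, smul_smul, L]
    congr 1
    ring
  · -- G L
    rw [br_single_single, D4_G, D4_L, br_zero_right, smul_zero, add_zero]
    simp only [brBasis]
    rw [br_smul_left, L, br_single_single, D4_smul, ← neg_smul, D4_smul, G, D4_G]
    simp only [brBasis]
    have h : m + n + 1 = n + 1 + m := by ring
    rw [h, smul_smul, smul_smul, smul_smul, smul_smul, L]
    congr 1
    ring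
  · -- G G
    rw [br_single_single, D4_G, D4_G]
    simp only [brBasis, smul_zero, D4_zero]
    rw [br_smul_left, br_smul_right, L, L, br_single_single, br_single_single]
    simp only [brBasis, sgn]
    have h : m + 1 + n = n + 1 + m := by ring
    rw [h]
    simp only [smul_neg, smul_smul]
    rw [← neg_smul, ← add_smul]
    convert (zero_smul ℂ _).symm using 2
    ring

lemma key2 (q : ℂ) (a : ℤ ⊕ ℤ) (c : ℂ) (y : Wq) :
    D4 (br q (Finsupp.single a c) y) =
      br q (D4 (Finsupp.single a c)) y + sgn a • br q (Finsupp.single a c) (D4 y) := by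
  rw [← Finsupp.sum_single y, Finsupp.sum]
  rw [br_sum_right, D4_sum, br_sum_right, D4_sum, br_sum_right, Finset.smul_sum,
    ← Finset.sum_add_distrib]
  exact Finset.sum_congr rfl fun b _ => key q a b c (y b)

/-- `D_4` is an odd `α⁰`-derivation of `W^q`:
`D_4([x,y]) = [D_4 x, y] + (-1)^{|x|} [x, D_4 y]` for homogeneous `x, y`. -/
theorem stmt10 (q : ℂ) (hq0 : q ≠ 0) (hq1 : q ≠ 1) :
    ∀ (i j : Bool) (x y : Wq), par i x → par j y →
      D4 (br q x y) = br q (D4 x) y + (if i then (-1 : ℂ) else 1) • br q x (D4 y) := by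
  intro i j x y hx hy
  have hsgn : ∀ a ∈ x.support, sgn a = (if i then (-1 : ℂ) else 1) := by
    intro a ha
    rcases a with n | n
    · cases i with
      | false => simp [sgn]
      | true => exact absurd (hx n) (Finsupp.mem_support_iff.mp ha)
    · cases i with
      | false => exact absurd (hx n) (Finsupp.mem_support_iff.mp ha)
      | true => simp [sgn]
  rw [← Finsupp.sum_single x, Finsupp.sum]
  rw [br_sum_left, D4_sum, D4_sum, br_sum_left, br_sum_left, Finset.smul_sum,
    ← Finset.sum_add_distrib]
  refine Finset.sum_congr rfl fun a ha => ?_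
  rw [← hsgn a ha]
  exact key2 q a (x a) y
end
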